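/- The assignment V ↦ E(V) induces a bijection from the set of isomorphism classes of simple objects V of R with End_R(V) one-dimensional over ℝ onto the set of isomorphism classes of simple objects W of C such that F(W) ≅ V' ⊕ V' for some simple object V' of R. Concretely: (a) for every simple V of R with End_R(V) one-dimensional, E(V) is simple in C and F(E(V)) ≅ V ⊕ V; (b) for simple V, V' of R, E(V) ≅ E(V') in C implies V ≅ V' in R; (c) every simple object W of C with F(W) ≅ V' ⊕ V' for some simple V' of R satisfies W ≅ E(V') and End_R(V') is one-dimensional over ℝ. -/

import Mathlib

set_option linter.unusedSectionVars false

open CategoryTheory CategoryTheory.Limits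

universe v u

variable (R : Type u) [Category.{v} R] [Abelian R] [CategoryTheory.Linear ℝ R]

/-- Objects of the category `C`: pairs `(V, ι)` with `ι ∘ ι = -1`. -/
structure CObj : Type max u v where
  V : R
  ι : V ⟶ V
  hι : ι ≫ ι = -𝟙 V

variable {R}

instance : Category.{v} (CObj R) where
  Hom W₁ W₂ := { φ : W₁.V ⟶ W₂.V // W₁.ι ≫ φ = φ ≫ W₂.ι }
  id W := ⟨𝟙 W.V, by simp⟩
  comp f g := ⟨f.1 ≫ g.1, by
    rw [← Category.assoc, f.2, Category.assoc, g.2, Category.assoc]⟩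
  id_comp f := Subtype.ext (Category.id_comp f.1)
  comp_id f := Subtype.ext (Category.comp_id f.1)
  assoc f g h := Subtype.ext (Category.assoc f.1 g.1 h.1)

@[ext]
lemma CObj.hom_ext {W₁ W₂ : CObj R} {f g : W₁ ⟶ W₂} (h : f.1 = g.1) : f = g :=
  Subtype.ext h

@[simp]
lemma CObj.id_coe (W : CObj R) : (𝟙 W : W ⟶ W).1 = 𝟙 W.V := rfl

@[simp]
lemma CObj.comp_coe {W₁ W₂ W₃ : CObj R} (f : W₁ ⟶ W₂) (g : W₂ ⟶ W₃) :
    (f ≫ g).1 = f.1 ≫ g.1 := rfl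

instance (W₁ W₂ : CObj R) : Zero (W₁ ⟶ W₂) := ⟨⟨0, by simp⟩⟩

instance (W₁ W₂ : CObj R) : Add (W₁ ⟶ W₂) :=
  ⟨fun f g => ⟨f.1 + g.1, by rw [Preadditive.comp_add, Preadditive.add_comp, f.2, g.2]⟩⟩

instance (W₁ W₂ : CObj R) : Neg (W₁ ⟶ W₂) :=
  ⟨fun f => ⟨-f.1, by rw [Preadditive.comp_neg, Preadditive.neg_comp, f.2]⟩⟩

instance (W₁ W₂ : CObj R) : Sub (W₁ ⟶ W₂) :=
  ⟨fun f g => ⟨f.1 - g.1, by rw [Preadditive.comp_sub, Preadditive.sub_comp, f.2, g.2]⟩⟩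

instance (W₁ W₂ : CObj R) : SMul ℕ (W₁ ⟶ W₂) :=
  ⟨fun n f => ⟨n • f.1, by rw [Linear.comp_smul, Linear.smul_comp, f.2]⟩⟩

instance (W₁ W₂ : CObj R) : SMul ℤ (W₁ ⟶ W₂) :=
  ⟨fun n f => ⟨n • f.1, by rw [Linear.comp_smul, Linear.smul_comp, f.2]⟩⟩

@[simp] lemma CObj.zero_coe (W₁ W₂ : CObj R) : (0 : W₁ ⟶ W₂).1 = 0 := rfl
@[simp] lemma CObj.add_coe {W₁ W₂ : CObj R} (f g : W₁ ⟶ W₂) : (f + g).1 = f.1 + g.1 := rfl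
@[simp] lemma CObj.neg_coe {W₁ W₂ : CObj R} (f : W₁ ⟶ W₂) : (-f).1 = -f.1 := rfl

instance (W₁ W₂ : CObj R) : AddCommGroup (W₁ ⟶ W₂) :=
  Function.Injective.addCommGroup (fun f : W₁ ⟶ W₂ => f.1) Subtype.val_injective
    rfl (fun _ _ => rfl) (fun _ => rfl) (fun _ _ => rfl) (fun _ _ => rfl) (fun _ _ => rfl)

instance : Preadditive (CObj R) where
  add_comp P Q S f f' g := by apply Subtype.ext; exact Preadditive.add_comp _ _ _ f.1 f'.1 g.1
  comp_add P Q S f g g' := by apply Subtype.ext; exact Preadditive.comp_add _ _ _ f.1 g.1 g'.1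

variable (R)

/-- The conjugation functor `B : C → C`. -/
def Bfunctor : CObj R ⥤ CObj R where
  obj W := ⟨W.V, -W.ι, by simp [W.hι]⟩
  map f := ⟨f.1, by simp [f.2]⟩
  map_id _ := rfl
  map_comp _ _ := rfl

/-- The forgetful functor `F : C → R`. -/
def Ffunctor : CObj R ⥤ R where
  obj W := W.V
  map f := f.1
  map_id _ := rfl
  map_comp _ _ := rfl

/-- The complexification functor `E : R → C`. -/
noncomputable def Efunctor : R ⥤ CObj R where
  obj V :=
    { V := V ⊞ V
      ι := -(biprod.snd ≫ biprod.inl) + biprod.fst ≫ biprod.inr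
      hι := by ext <;> simp }
  map φ := ⟨biprod.map φ φ, by ext <;> simp⟩
  map_id V := Subtype.ext (by ext <;> simp)
  map_comp f g := Subtype.ext (by ext <;> simp)

variable {R}

/-- The biproduct `(V₁ ⊕ V₂, ι₁ ⊕ ι₂)` of two objects of `C`. -/
noncomputable def csum (W₁ W₂ : CObj R) : CObj R where
  V := W₁.V ⊞ W₂.V
  ι := biprod.map W₁.ι W₂.ι
  hι := by ext <;> simp [W₁.hι, W₂.hι]

/-- Multiplication by `i` as a morphism in `C`. -/
def iMor (W : CObj R) : W ⟶ W := ⟨W.ι, rfl⟩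

open scoped TensorProduct Quaternion

variable [EssentiallySmall.{v} R]

section AlgebraLemma
open Polynomial

/-- In a finite-dimensional real division algebra, every element is either a real scalar
or gives rise to a square root of `-1`. -/
lemma scalar_or_sqrt_neg_one {A : Type*} [DivisionRing A] [Algebra ℝ A]
    [FiniteDimensional ℝ A] (x : A) :
    (∃ c : ℝ, x = c • 1) ∨ (∃ j : A, j * j = -1) := by
  have hx : IsIntegral ℝ x := Algebra.IsIntegral.isIntegral x
  set p := minpoly ℝ x with hp
  have hmon : p.Monic := minpoly.monic hx
  have hirr : Irreducible p := minpoly.irreducible hx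
  have hd2 : p.natDegree ≤ 2 := hirr.natDegree_le_two
  have hd1 : 1 ≤ p.natDegree := (minpoly.natDegree_pos hx)
  interval_cases h : p.natDegree
  · -- degree 1
    left
    have := hmon.eq_X_add_C h
    have hz := minpoly.aeval ℝ x
    rw [← hp, this] at hz
    simp only [map_add, aeval_X, aeval_C] at hz
    refine ⟨-(p.coeff 0), ?_⟩
    rw [Algebra.algebraMap_eq_smul_one] at hz
    rw [neg_smul, eq_neg_iff_add_eq_zero]
    exact hz
  · -- degree 2
    right
    set b := p.coeff 1
    set c := p.coeff 0
    have hrep : p = X ^ 2 + C b * X + C c := by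
      have h2 : (p - X ^ 2).natDegree ≤ 1 := by
        rw [natDegree_le_iff_coeff_eq_zero]
        intro m hm
        rcases Nat.lt_or_ge m 3 with hm3 | hm3
        · interval_cases m
          · simp [coeff_X_pow, hmon.coeff_natDegree, ← h]
        · rw [Polynomial.coeff_sub, coeff_X_pow, if_neg (by omega),
            Polynomial.coeff_eq_zero_of_natDegree_lt (by omega), sub_zero]
      have := eq_X_add_C_of_natDegree_le_one h2
      have hb : (p - X ^ 2).coeff 1 = b := by simp [b, coeff_X_pow]
      have hc : (p - X ^ 2).coeff 0 = c := by simp [c, coeff_X_pow]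
      rw [hb, hc] at this
      have := sub_eq_iff_eq_add.mp this
      rw [this]; ring
    -- no real root, so discriminant is negative
    have hnoroot : ∀ r : ℝ, r ^ 2 + b * r + c ≠ 0 := by
      intro r hr
      have : p.IsRoot r := by
        rw [hrep]; simp [IsRoot, hr]
      have hdeg1 := Polynomial.degree_eq_one_of_irreducible_of_root hirr this
      rw [degree_eq_natDegree hmon.ne_zero, h] at hdeg1
      exact (by norm_num : (2 : WithBot ℕ) ≠ 1) hdeg1
    have hdisc : c - b ^ 2 / 4 > 0 := by
      by_contra hcon
      push_neg at hcon
      have hge : b ^ 2 / 4 - c ≥ 0 := by linarith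
      apply hnoroot (-b / 2 + Real.sqrt (b ^ 2 / 4 - c))
      have hs : Real.sqrt (b ^ 2 / 4 - c) ^ 2 = b ^ 2 / 4 - c := Real.sq_sqrt hge
      linear_combination hs
    -- build the square root of -1
    have hz := minpoly.aeval ℝ x
    rw [← hp, hrep] at hz
    simp only [map_add, map_mul, map_pow, aeval_X, aeval_C] at hz
    have hpoly : ((X + C (b/2)) * (X + C (b/2)) : ℝ[X])
        = (X^2 + C b * X + C c) + C (b^2/4 - c) := by
      have h1 : (C b : ℝ[X]) = C (b/2) + C (b/2) := by rw [← map_add]; norm_num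
      have h2 : (C (b^2/4 - c) + C c : ℝ[X]) = C (b/2) * C (b/2) := by
        rw [← map_mul, ← map_add]; congr 1; ring
      calc (X + C (b/2)) * (X + C (b/2))
          = X^2 + (C (b/2) + C (b/2)) * X + C (b/2) * C (b/2) := by ring
        _ = X^2 + C b * X + (C (b^2/4 - c) + C c) := by rw [h1, h2]
        _ = (X^2 + C b * X + C c) + C (b^2/4 - c) := by ring
    have key : (x + algebraMap ℝ A (b/2)) * (x + algebraMap ℝ A (b/2))
        = algebraMap ℝ A (b^2/4 - c) := by
      have h3 := congrArg (aeval x) hpoly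
      simp only [map_add, map_mul, map_pow, aeval_X, aeval_C] at h3
      rw [h3, hz, zero_add]
    set t := Real.sqrt (c - b ^ 2 / 4)
    have ht : t ^ 2 = c - b ^ 2 / 4 := Real.sq_sqrt hdisc.le
    have ht0 : t ≠ 0 := by
      intro h0; rw [h0] at ht; simp at ht; linarith
    refine ⟨t⁻¹ • (x + algebraMap ℝ A (b/2)), ?_⟩
    rw [smul_mul_smul_comm, key, Algebra.algebraMap_eq_smul_one, smul_smul]
    have hval : t⁻¹ * t⁻¹ * (b ^ 2 / 4 - c) = -1 := by
      have htt : t * t = c - b ^ 2 / 4 := by nlinarith [ht]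
      field_simp
      linarith
    rw [hval, neg_smul, one_smul]

end AlgebraLemma

section Helpers

@[simp] lemma E_obj_V (Z : R) : ((Efunctor R).obj Z).V = (Z ⊞ Z : R) := rfl

@[simp] lemma E_obj_ι (Z : R) :
    ((Efunctor R).obj Z).ι = -(biprod.snd ≫ biprod.inl) + biprod.fst ≫ biprod.inr := rfl

@[simp] lemma CObj.sub_coe {W₁ W₂ : CObj R} (f g : W₁ ⟶ W₂) : (f - g).1 = f.1 - g.1 := rfl

/-- A morphism of `C` whose underlying morphism is an isomorphism is an isomorphism. -/
lemma isIso_of_val {W₁ W₂ : CObj R} (f : W₁ ⟶ W₂) (h : IsIso f.1) : IsIso f := by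
  haveI := h
  refine ⟨⟨⟨inv f.1, ?_⟩, ?_, ?_⟩⟩
  · rw [← cancel_mono f.1]
    simp [f.2]
  · apply CObj.hom_ext; simp
  · apply CObj.hom_ext; simp

lemma val_isIso {W₁ W₂ : CObj R} (f : W₁ ⟶ W₂) (h : IsIso f) : IsIso f.1 := by
  haveI := h
  refine ⟨⟨(inv f).1, ?_, ?_⟩⟩
  · show f.1 ≫ (inv f).1 = 𝟙 W₁.V
    rw [← CObj.comp_coe, IsIso.hom_inv_id]; rfl
  · show (inv f).1 ≫ f.1 = 𝟙 W₂.V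
    rw [← CObj.comp_coe, IsIso.inv_hom_id]; rfl

lemma mono_of_val {W₁ W₂ : CObj R} (f : W₁ ⟶ W₂) (h : Mono f.1) : Mono f := by
  constructor
  intro Z g g' H
  apply CObj.hom_ext
  rw [← cancel_mono f.1]
  exact congrArg Subtype.val H

lemma ne_zero_val {W₁ W₂ : CObj R} {f : W₁ ⟶ W₂} (h : f ≠ 0) : f.1 ≠ 0 := by
  intro h0; exact h (CObj.hom_ext h0)

/-- `F` reflects the property of the underlying morphism being a monomorphism. -/
lemma val_mono {W₁ W₂ : CObj R} (f : W₁ ⟶ W₂) [Mono f] : Mono f.1 := by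
  constructor
  intro Z g g' H
  have compat : ∀ u : Z ⟶ W₁.V,
      ((Efunctor R).obj Z).ι ≫ biprod.desc u (u ≫ W₁.ι) =
        biprod.desc u (u ≫ W₁.ι) ≫ W₁.ι := by
    intro u
    apply biprod.hom_ext' <;> simp [W₁.hι]
  let G : (Efunctor R).obj Z ⟶ W₁ := ⟨biprod.desc g (g ≫ W₁.ι), compat g⟩
  let G' : (Efunctor R).obj Z ⟶ W₁ := ⟨biprod.desc g' (g' ≫ W₁.ι), compat g'⟩
  have hGG : G ≫ f = G' ≫ f := by
    apply CObj.hom_ext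
    show biprod.desc g (g ≫ W₁.ι) ≫ f.1 = biprod.desc g' (g' ≫ W₁.ι) ≫ f.1
    apply biprod.hom_ext'
    · simpa using H
    · have h2 : W₁.ι ≫ f.1 = f.1 ≫ W₂.ι := f.2
      simp only [biprod.inr_desc_assoc, Category.assoc, h2]
      rw [← Category.assoc, H, Category.assoc]
  have := congrArg Subtype.val ((cancel_mono f).mp hGG)
  have h1 := congrArg (fun t => biprod.inl ≫ t) this
  simpa [G, G'] using h1

/-- Objects of `C` with simple underlying object are simple. -/
lemma simple_of_val_simple (W : CObj R) (hs : Simple W.V) : Simple W := by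
  constructor
  intro Y f hm
  constructor
  · intro hiso h0
    haveI := hs
    haveI := hiso
    have h1 : (𝟙 W : W ⟶ W) = 0 := by
      have h2 := congrArg (fun t => inv f ≫ t) h0
      simpa using h2
    have h2 := congrArg Subtype.val h1
    simp only [CObj.id_coe, CObj.zero_coe] at h2
    exact id_nonzero W.V h2
  · intro hne
    haveI := hs
    haveI : Mono f.1 := val_mono f
    haveI : IsIso f.1 := isIso_of_mono_of_nonzero (ne_zero_val hne)
    exact isIso_of_val f this

/-- A nonzero morphism out of a simple object of `C` has monic underlying morphism. -/
lemma mono_val_of_ne_zero {W W' : CObj R} (hW : Simple W) {χ : W ⟶ W'} (hχ : χ ≠ 0) :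
    Mono χ.1 := by
  haveI := hW
  set k0 := kernel.ι χ.1 with hk0
  have hcond : (k0 ≫ W.ι) ≫ χ.1 = 0 := by
    rw [Category.assoc, χ.2, ← Category.assoc, kernel.condition, zero_comp]
  set κK : kernel χ.1 ⟶ kernel χ.1 := kernel.lift χ.1 (k0 ≫ W.ι) hcond with hκK
  have hlift : κK ≫ k0 = k0 ≫ W.ι := kernel.lift_ι _ _ _
  have hκK2 : κK ≫ κK = -𝟙 _ := by
    rw [← cancel_mono k0]
    rw [Category.assoc, hlift, ← Category.assoc, hlift, Category.assoc, W.hι]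
    simp
  let K : CObj R := ⟨kernel χ.1, κK, hκK2⟩
  let kmor : K ⟶ W := ⟨k0, hlift⟩
  haveI : Mono kmor := mono_of_val _ (by exact inferInstance)
  have hk : kmor = 0 := by
    by_contra hk
    haveI : IsIso kmor := (Simple.mono_isIso_iff_nonzero kmor).mpr hk
    apply hχ
    have : kmor ≫ χ = 0 := by
      apply CObj.hom_ext
      exact kernel.condition χ.1
    calc χ = inv kmor ≫ (kmor ≫ χ) := by simp
    _ = 0 := by rw [this, Limits.comp_zero]
  have hk0z : kernel.ι χ.1 = 0 := congrArg Subtype.val hk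
  exact Preadditive.mono_of_kernel_zero hk0z

/-- A simple object is not isomorphic to its square. -/
lemma no_self_biprod {V' : R} (hV' : Simple V') (θ : V' ≅ (V' ⊞ V' : R)) : False := by
  haveI := hV'
  set c₁ := (biprod.inl : V' ⟶ V' ⊞ V') ≫ θ.inv with hc1
  set c₂ := (biprod.inr : V' ⟶ V' ⊞ V') ≫ θ.inv with hc2
  have hc2ne : c₂ ≠ 0 := by
    intro h0
    apply id_nonzero V'
    have hh : (biprod.inr : V' ⟶ V' ⊞ V') = 0 := by
      have : (biprod.inr : V' ⟶ V' ⊞ V') = c₂ ≫ θ.hom := by simp [hc2]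
      rw [this, h0, zero_comp]
    calc 𝟙 V' = (biprod.inr : V' ⟶ V' ⊞ V') ≫ biprod.snd := by simp
    _ = 0 := by rw [hh, zero_comp]
  have hc1ne : c₁ ≠ 0 := by
    intro h0
    apply id_nonzero V'
    have hh : (biprod.inl : V' ⟶ V' ⊞ V') = 0 := by
      have : (biprod.inl : V' ⟶ V' ⊞ V') = c₁ ≫ θ.hom := by simp [hc1]
      rw [this, h0, zero_comp]
    calc 𝟙 V' = (biprod.inl : V' ⟶ V' ⊞ V') ≫ biprod.fst := by simp
    _ = 0 := by rw [hh, zero_comp]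
  haveI : Mono c₁ := mono_comp _ _
  haveI : Mono c₂ := mono_comp _ _
  haveI : IsIso c₁ := isIso_of_mono_of_nonzero hc1ne
  haveI : IsIso c₂ := isIso_of_mono_of_nonzero hc2ne
  have hsnd : θ.hom ≫ (biprod.snd : V' ⊞ V' ⟶ V') = 0 := by
    rw [← cancel_epi c₁]
    simp [hc1]
  apply id_nonzero V'
  calc 𝟙 V' = (biprod.inr : V' ⟶ V' ⊞ V') ≫ biprod.snd := by simp
  _ = c₂ ≫ θ.hom ≫ biprod.snd := by simp [hc2]
  _ = 0 := by rw [hsnd, Limits.comp_zero]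

end Helpers

section PartA

/-- If `V` is simple with scalar endomorphisms, then `E(V)` is simple. -/
lemma simple_E {V : R} (hV : Simple V) (hsc : ∀ f : V ⟶ V, ∃ c : ℝ, f = c • 𝟙 V) :
    Simple ((Efunctor R).obj V) := by
  haveI := hV
  constructor
  intro Y f hm
  constructor
  · intro hiso h0
    haveI := hiso
    have h1 : (𝟙 ((Efunctor R).obj V)) = 0 := by
      have h2 := congrArg (fun t => inv f ≫ t) h0
      simpa using h2
    have h2 := congrArg Subtype.val h1
    simp only [CObj.id_coe, CObj.zero_coe] at h2
    have h2' : 𝟙 (V ⊞ V : R) = 0 := h2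
    apply id_nonzero V
    calc 𝟙 V = (biprod.inl : V ⟶ V ⊞ V) ≫ 𝟙 (V ⊞ V : R) ≫ biprod.fst := by simp
    _ = 0 := by rw [h2']; simp
  · intro hne
    haveI : Mono f.1 := val_mono f
    set g₁ := f.1 ≫ (biprod.fst : (V ⊞ V : R) ⟶ V) with hg1
    set g₂ := f.1 ≫ (biprod.snd : (V ⊞ V : R) ⟶ V) with hg2
    have hcomp : Y.ι ≫ f.1 = f.1 ≫ ((Efunctor R).obj V).ι := f.2
    have rel1 : Y.ι ≫ g₁ = -g₂ := by
      erw [hg1, ← Category.assoc, hcomp, Category.assoc]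
      simp [hg2]
    have rel2 : Y.ι ≫ g₂ = g₁ := by
      erw [hg2, ← Category.assoc, hcomp, Category.assoc]
      simp [hg1]
    have hg1ne : g₁ ≠ 0 := by
      intro h0
      have h02 : g₂ = 0 := by
        have h3 := rel1
        rw [h0, Limits.comp_zero] at h3
        exact neg_eq_zero.mp h3.symm
      apply hne
      apply CObj.hom_ext
      show f.1 = (0 : _ ⟶ _)
      apply biprod.hom_ext
      · erw [← hg1, h0, zero_comp]
      · erw [← hg2, h02, zero_comp]
    have hg2ne : g₂ ≠ 0 := by
      intro h0
      exact hg1ne (by rw [← rel2, h0, Limits.comp_zero])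
    haveI : Epi g₁ := epi_of_nonzero_to_simple hg1ne
    set k := kernel.ι g₁ with hk
    set d := k ≫ g₂ with hd
    have hkg1 : k ≫ g₁ = 0 := kernel.condition g₁
    by_cases hdz : d = 0
    · have hk0 : k ≫ f.1 = 0 := by
        apply biprod.hom_ext
        · erw [Category.assoc, ← hg1, hkg1, zero_comp]
        · erw [Category.assoc, ← hg2, ← hd, hdz, zero_comp]
      have hkz : k = 0 := zero_of_comp_mono f.1 hk0
      haveI : Mono g₁ := Preadditive.mono_of_kernel_zero (hk ▸ hkz)
      haveI : IsIso g₁ := isIso_of_mono_of_epi g₁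
      obtain ⟨c, hc⟩ := hsc (inv g₁ ≫ g₂)
      have hg2c : g₂ = c • g₁ := by
        calc g₂ = g₁ ≫ (inv g₁ ≫ g₂) := by simp
        _ = g₁ ≫ (c • 𝟙 V) := by rw [hc]
        _ = c • g₁ := by simp
      exfalso
      have key : (1 + c * c) • g₁ = 0 := by
        have h1 := rel2
        rw [hg2c, Linear.comp_smul, rel1, hg2c, smul_neg, smul_smul] at h1
        calc (1 + c * c) • g₁ = g₁ + (c * c) • g₁ := by rw [add_smul, one_smul]
        _ = -((c * c) • g₁) + (c * c) • g₁ := by rw [h1]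
        _ = 0 := neg_add_cancel _
      apply hg1ne
      have hcc : (1 + c * c) ≠ 0 := by nlinarith [sq_nonneg c]
      calc g₁ = (1 + c * c)⁻¹ • ((1 + c * c) • g₁) := by
            rw [smul_smul, inv_mul_cancel₀ hcc, one_smul]
      _ = 0 := by rw [key, smul_zero]
    · have hkf : k ≫ f.1 = d ≫ biprod.inr := by
        apply biprod.hom_ext
        · erw [Category.assoc, ← hg1, hkg1]
          simp
        · erw [Category.assoc, ← hg2, ← hd]
          simp
      have hmd : Mono d := by
        have hmono : Mono (k ≫ f.1) := mono_comp _ _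
        rw [hkf] at hmono
        haveI := hmono
        exact @mono_of_mono _ _ _ _ _ d _ hmono
      haveI := hmd
      haveI : IsIso d := isIso_of_mono_of_nonzero hdz
      set s := inv d ≫ k with hs
      have hsf : s ≫ f.1 = biprod.inr := by
        erw [hs, Category.assoc, hkf, ← Category.assoc, IsIso.inv_hom_id, Category.id_comp]
      have hsκf : (s ≫ Y.ι) ≫ f.1 = -biprod.inl := by
        rw [Category.assoc, hcomp, ← Category.assoc, hsf]
        simp
      set t := biprod.desc (-(s ≫ Y.ι)) s with ht
      have htf : t ≫ f.1 = 𝟙 (V ⊞ V : R) := by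
        apply biprod.hom_ext'
        · erw [ht, ← Category.assoc, biprod.inl_desc, Preadditive.neg_comp, hsκf, neg_neg]
          simp
        · rw [ht, ← Category.assoc, biprod.inr_desc, hsf]
          simp
      haveI : IsSplitEpi f.1 := IsSplitEpi.mk' ⟨t, htf⟩
      haveI : IsIso f.1 := isIso_of_mono_of_epi f.1
      exact isIso_of_val f this

/-- Part (b): `E(V) ≅ E(V')` implies `V ≅ V'` for simple `V`, `V'`. -/
lemma iso_of_E_iso {V V' : R} (hV : Simple V) (hV' : Simple V')
    (α : (Efunctor R).obj V ≅ (Efunctor R).obj V') : Nonempty (V ≅ V') := by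
  haveI := hV; haveI := hV'
  set β := α.hom.1 with hβ
  have hβne : β ≠ 0 := by
    intro h0
    have h1 := congrArg Subtype.val α.hom_inv_id
    simp only [CObj.comp_coe, CObj.id_coe] at h1
    rw [← hβ, h0, zero_comp] at h1
    have h2' : 𝟙 (V ⊞ V : R) = 0 := h1.symm
    apply id_nonzero V
    calc 𝟙 V = (biprod.inl : V ⟶ V ⊞ V) ≫ 𝟙 (V ⊞ V : R) ≫ biprod.fst := by simp
    _ = 0 := by rw [h2']; simp
  -- some component is nonzero
  have : ∃ c : V ⟶ V', c ≠ 0 := by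
    by_contra hno
    push_neg at hno
    apply hβne
    apply biprod.hom_ext' <;> apply biprod.hom_ext <;>
      exact (hno _).trans (hno _).symm
  obtain ⟨c, hc⟩ := this
  haveI : IsIso c := isIso_of_hom_simple hc
  exact ⟨asIso c⟩

end PartA

section PartC

lemma desc_compat {Z : R} {W : CObj R} (g : Z ⟶ W.V) :
    ((Efunctor R).obj Z).ι ≫ biprod.desc g (g ≫ W.ι) = biprod.desc g (g ≫ W.ι) ≫ W.ι := by
  apply biprod.hom_ext' <;> simp [W.hι]

lemma lift_compat {Z : R} {W : CObj R} (h : W.V ⟶ Z) :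
    W.ι ≫ biprod.lift h (-(W.ι ≫ h)) =
      biprod.lift h (-(W.ι ≫ h)) ≫ ((Efunctor R).obj Z).ι := by
  apply biprod.hom_ext <;> simp [reassoc_of% W.hι]

/-- The morphism `E(V') ⟶ W` induced by `g : V' ⟶ F(W)`. -/
noncomputable def φmor {V' : R} {W : CObj R} (g : V' ⟶ W.V) : (Efunctor R).obj V' ⟶ W :=
  ⟨biprod.desc g (g ≫ W.ι), desc_compat g⟩

/-- The morphism `W ⟶ E(V')` induced by `h : F(W) ⟶ V'`. -/
noncomputable def ψmor {V' : R} {W : CObj R} (h : W.V ⟶ V') : W ⟶ (Efunctor R).obj V' :=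
  ⟨biprod.lift h (-(W.ι ≫ h)), lift_compat h⟩

/-- If some simple `(V', j)` with `j ≫ j = -1` admits a nonzero map to a simple `W` of `C`
with `F(W) ≅ V' ⊞ V'`, we get a contradiction. -/
lemma bad {V' : R} (hV' : Simple V') {W : CObj R} (hW : Simple W) (e : W.V ≅ (V' ⊞ V' : R))
    (j : V' ⟶ V') (hj : j ≫ j = -𝟙 V') (m : V' ⟶ W.V) (hm : j ≫ m = m ≫ W.ι)
    (hm0 : m ≠ 0) : False := by
  haveI := hW
  set Vt : CObj R := ⟨V', j, hj⟩ with hVt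
  haveI hsV : Simple Vt := simple_of_val_simple Vt hV'
  let χ : Vt ⟶ W := ⟨m, hm⟩
  have hχ : χ ≠ 0 := fun h0 => hm0 (congrArg Subtype.val h0)
  haveI : Mono χ.1 := mono_val_of_ne_zero hsV hχ
  haveI : Mono χ := mono_of_val χ inferInstance
  haveI hiso : IsIso χ := (Simple.mono_isIso_iff_nonzero χ).mpr hχ
  haveI : IsIso χ.1 := val_isIso χ hiso
  exact no_self_biprod hV' ((asIso χ.1) ≪≫ e)

/-- If a simple `W` of `C` has `F(W) ≅ V' ⊞ V'` with `V'` simple, then every endomorphism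
of `V'` is a real scalar. -/
lemma end_scalar {V' : R} (hV' : Simple V') (hfin : FiniteDimensional ℝ (V' ⟶ V'))
    {W : CObj R} (hW : Simple W) (e : W.V ≅ (V' ⊞ V' : R)) (f : V' ⟶ V') :
    ∃ c : ℝ, f = c • 𝟙 V' := by
  haveI := hV'
  haveI : FiniteDimensional ℝ (End V') := hfin
  rcases scalar_or_sqrt_neg_one (A := End V') f with ⟨c, hc⟩ | ⟨j, hj⟩
  · exact ⟨c, hc⟩
  · exfalso
    have hjj : j ≫ j = -𝟙 V' := hj
    obtain ⟨m, hmd⟩ : ∃ m : V' ⟶ W.V, m = (biprod.inl : V' ⟶ V' ⊞ V') ≫ e.inv := ⟨_, rfl⟩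
    have hm0 : m ≠ 0 := by
      intro h0
      apply id_nonzero V'
      have hh : (biprod.inl : V' ⟶ V' ⊞ V') = 0 := by
        have : (biprod.inl : V' ⟶ V' ⊞ V') = m ≫ e.hom := by simp [hmd]
        rw [this, h0, zero_comp]
      calc 𝟙 V' = (biprod.inl : V' ⟶ V' ⊞ V') ≫ biprod.fst := by simp
      _ = 0 := by rw [hh, zero_comp]
    set a := m - j ≫ m ≫ W.ι with ha
    set b := m + j ≫ m ≫ W.ι with hb
    have hcompa : j ≫ a = a ≫ W.ι := by
      rw [ha, Preadditive.comp_sub, Preadditive.sub_comp]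
      simp only [Category.assoc]
      rw [reassoc_of% hjj, W.hι]
      simp
      abel
    have hcompb : (-j) ≫ b = b ≫ W.ι := by
      rw [hb, Preadditive.comp_add, Preadditive.add_comp, Preadditive.neg_comp,
        Preadditive.neg_comp]
      simp only [Category.assoc]
      rw [reassoc_of% hjj, W.hι]
      simp
      abel
    by_cases haz : a = 0
    · have hbne : b ≠ 0 := by
        intro h0
        apply hm0
        have hsum : a + b = m + m := by rw [ha, hb]; abel
        rw [haz, h0, add_zero] at hsum
        have h2 : (2:ℝ) • m = 0 := by rw [two_smul]; exact hsum.symm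
        calc m = (2:ℝ)⁻¹ • ((2:ℝ) • m) := by rw [smul_smul]; norm_num
        _ = 0 := by rw [h2, smul_zero]
      exact bad hV' hW e (-j) (by rw [Preadditive.neg_comp, Preadditive.comp_neg, neg_neg, hjj])
        b hcompb hbne
    · exact bad hV' hW e j hjj a hcompa haz

/-- Construction of the isomorphism `W ≅ E(V')`. -/
lemma c_iso {V' : R} (hV' : Simple V') {W : CObj R} (hW : Simple W)
    (hD : ∀ f : V' ⟶ V', ∃ c : ℝ, f = c • 𝟙 V') (e : W.V ≅ (V' ⊞ V' : R)) :
    Nonempty (W ≅ (Efunctor R).obj V') := by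
  haveI := hV'; haveI := hW
  set g₁ := (biprod.inl : V' ⟶ V' ⊞ V') ≫ e.inv with hg1
  set g₂ := (biprod.inr : V' ⟶ V' ⊞ V') ≫ e.inv with hg2
  set h₁ := e.hom ≫ (biprod.fst : (V' ⊞ V' : R) ⟶ V') with hh1
  set h₂ := e.hom ≫ (biprod.snd : (V' ⊞ V' : R) ⟶ V') with hh2
  have hsum : h₁ ≫ g₁ + h₂ ≫ g₂ = 𝟙 W.V := by
    rw [hg1, hg2, hh1, hh2]
    have htot : (biprod.fst ≫ biprod.inl + biprod.snd ≫ biprod.inr :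
        (V' ⊞ V' : R) ⟶ (V' ⊞ V' : R)) = 𝟙 _ := biprod.total
    calc (e.hom ≫ biprod.fst) ≫ biprod.inl ≫ e.inv + (e.hom ≫ biprod.snd) ≫ biprod.inr ≫ e.inv
        = e.hom ≫ (biprod.fst ≫ biprod.inl + biprod.snd ≫ biprod.inr) ≫ e.inv := by
          simp only [Preadditive.comp_add, Preadditive.add_comp, Category.assoc]
      _ = 𝟙 W.V := by rw [htot]; simp
  have hIdW : 𝟙 W.V ≠ 0 := by
    intro h0
    apply id_nonzero V'
    calc 𝟙 V' = (biprod.inl : V' ⟶ V' ⊞ V') ≫ biprod.fst := by simp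
    _ = (biprod.inl : V' ⟶ V' ⊞ V') ≫ (e.inv ≫ e.hom) ≫ biprod.fst := by simp
    _ = (biprod.inl : V' ⟶ V' ⊞ V') ≫ (e.inv ≫ 𝟙 W.V ≫ e.hom) ≫ biprod.fst := by simp
    _ = 0 := by rw [h0]; simp
  have hηval : ∀ (g : V' ⟶ W.V) (h : W.V ⟶ V'),
      (ψmor h ≫ φmor g).1 = h ≫ g + (-(W.ι ≫ h)) ≫ (g ≫ W.ι) := by
    intro g h
    show biprod.lift h (-(W.ι ≫ h)) ≫ biprod.desc g (g ≫ W.ι) = _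
    rw [biprod.lift_desc]
  have hkey : (W.ι ≫ h₁) ≫ (g₁ ≫ W.ι) + (W.ι ≫ h₂) ≫ (g₂ ≫ W.ι) = -𝟙 W.V := by
    calc (W.ι ≫ h₁) ≫ (g₁ ≫ W.ι) + (W.ι ≫ h₂) ≫ (g₂ ≫ W.ι)
        = W.ι ≫ (h₁ ≫ g₁ + h₂ ≫ g₂) ≫ W.ι := by
          simp [Preadditive.comp_add, Preadditive.add_comp]
      _ = W.ι ≫ W.ι := by rw [hsum]; simp
      _ = -𝟙 W.V := W.hι
  have hsum2 : (ψmor h₁ ≫ φmor g₁).1 + (ψmor h₂ ≫ φmor g₂).1 = 𝟙 W.V + 𝟙 W.V := by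
    rw [hηval, hηval]
    simp only [Preadditive.neg_comp]
    calc h₁ ≫ g₁ + -((W.ι ≫ h₁) ≫ (g₁ ≫ W.ι)) + (h₂ ≫ g₂ + -((W.ι ≫ h₂) ≫ (g₂ ≫ W.ι)))
        = (h₁ ≫ g₁ + h₂ ≫ g₂)
          - ((W.ι ≫ h₁) ≫ (g₁ ≫ W.ι) + (W.ι ≫ h₂) ≫ (g₂ ≫ W.ι)) := by abel
      _ = 𝟙 W.V - (-𝟙 W.V) := by rw [hsum, hkey]
      _ = 𝟙 W.V + 𝟙 W.V := by abel
  have hex : (ψmor h₁ ≫ φmor g₁) ≠ 0 ∨ (ψmor h₂ ≫ φmor g₂) ≠ 0 := by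
    by_contra hcon
    push_neg at hcon
    have hz : (ψmor h₁ ≫ φmor g₁).1 + (ψmor h₂ ≫ φmor g₂).1 = 0 := by
      rw [hcon.1, hcon.2]; simp
    rw [hsum2] at hz
    apply hIdW
    have h2 : (2:ℝ) • 𝟙 W.V = 0 := by rw [two_smul]; exact hz
    calc 𝟙 W.V = (2:ℝ)⁻¹ • ((2:ℝ) • 𝟙 W.V) := by rw [smul_smul]; norm_num
    _ = 0 := by rw [h2, smul_zero]
  suffices key : ∀ (g : V' ⟶ W.V) (h : W.V ⟶ V'), (ψmor h ≫ φmor g) ≠ 0 →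
      Nonempty (W ≅ (Efunctor R).obj V') by
    rcases hex with hx | hx
    exacts [key g₁ h₁ hx, key g₂ h₂ hx]
  intro g h hη
  set η := ψmor h ≫ φmor g with hηdef
  haveI : Mono η.1 := mono_val_of_ne_zero hW hη
  haveI : Mono η := mono_of_val η inferInstance
  haveI hηiso : IsIso η := (Simple.mono_isIso_iff_nonzero η).mpr hη
  haveI hψmono : Mono (ψmor (W := W) h).1 := by
    have hret : (ψmor (W := W) h).1 ≫ (φmor g ≫ inv η).1 = 𝟙 W.V := by
      have h5 : ψmor (W := W) h ≫ (φmor g ≫ inv η) = 𝟙 W := by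
        rw [← Category.assoc, ← hηdef, IsIso.hom_inv_id]
      exact congrArg Subtype.val h5
    haveI : IsSplitMono (ψmor (W := W) h).1 := IsSplitMono.mk' ⟨(φmor g ≫ inv η).1, hret⟩
    infer_instance
  obtain ⟨A, hA⟩ := hD (g ≫ h)
  obtain ⟨B, hB⟩ := hD (g ≫ W.ι ≫ h)
  set τ : (Efunctor R).obj V' ⟶ (Efunctor R).obj V' := φmor g ≫ ψmor h with hτdef
  set J' : (V' ⊞ V' : R) ⟶ (V' ⊞ V' : R) := ((Efunctor R).obj V').ι with hJ'
  have hJJ : J' ≫ J' = -𝟙 (V' ⊞ V' : R) := ((Efunctor R).obj V').hι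
  have hτval : τ.1 = A • 𝟙 (V' ⊞ V' : R) - B • J' := by
    show biprod.desc g (g ≫ W.ι) ≫ biprod.lift h (-(W.ι ≫ h)) = _
    apply biprod.hom_ext'
    · apply biprod.hom_ext
      · simpa [hJ'] using hA
      · have : g ≫ (-(W.ι ≫ h)) = -(g ≫ W.ι ≫ h) := by simp
        simp [this, hB, hJ']
    · apply biprod.hom_ext
      · simpa [hJ'] using hB
      · simp [reassoc_of% W.hι, hA, hJ']
  by_cases hab : A = 0 ∧ B = 0
  · exfalso
    obtain ⟨hA0, hB0⟩ := hab
    have hτ0 : τ = 0 := by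
      apply CObj.hom_ext
      rw [hτval, hA0, hB0]
      simp; rfl
    have hηη : η ≫ η = 0 := by
      have h6 : η ≫ η = ψmor h ≫ τ ≫ φmor g := by
        rw [hτdef, hηdef]; simp only [Category.assoc]
      rw [h6, hτ0, Limits.zero_comp, Limits.comp_zero]
    haveI : IsIso (η ≫ η) := inferInstance
    apply id_nonzero W
    have h9 := congrArg (fun t => inv (η ≫ η) ≫ t) hηη
    simp only [Limits.comp_zero] at h9
    rw [IsIso.inv_hom_id] at h9
    exact h9
  · have hs : A ^ 2 + B ^ 2 ≠ 0 := by
      intro h0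
      apply hab
      constructor
      · have h1 : A ^ 2 ≤ 0 := by nlinarith [sq_nonneg B]
        exact sq_eq_zero_iff.mp (le_antisymm h1 (sq_nonneg A))
      · have h1 : B ^ 2 ≤ 0 := by nlinarith [sq_nonneg A]
        exact sq_eq_zero_iff.mp (le_antisymm h1 (sq_nonneg B))
    have hcalc1 : (A • 𝟙 (V' ⊞ V' : R) - B • J') ≫ (A • 𝟙 (V' ⊞ V' : R) + B • J')
        = (A ^ 2 + B ^ 2) • 𝟙 (V' ⊞ V' : R) := by
      simp only [Preadditive.sub_comp, Preadditive.comp_add, Linear.smul_comp,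
        Linear.comp_smul, Category.comp_id, Category.id_comp, smul_smul, hJJ, smul_neg]
      match_scalars <;> ring
    have hcalc2 : (A • 𝟙 (V' ⊞ V' : R) + B • J') ≫ (A • 𝟙 (V' ⊞ V' : R) - B • J')
        = (A ^ 2 + B ^ 2) • 𝟙 (V' ⊞ V' : R) := by
      simp only [Preadditive.add_comp, Preadditive.comp_sub, Linear.smul_comp,
        Linear.comp_smul, Category.comp_id, Category.id_comp, smul_smul, hJJ, smul_neg]
      match_scalars <;> ring
    haveI : IsIso τ.1 := by
      refine ⟨⟨(A ^ 2 + B ^ 2)⁻¹ • (A • 𝟙 (V' ⊞ V' : R) + B • J'), ?_, ?_⟩⟩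
      · erw [Linear.comp_smul, hτval, hcalc1, smul_smul, inv_mul_cancel₀ hs, one_smul]
        rfl
      · erw [Linear.smul_comp, hτval, hcalc2, smul_smul, inv_mul_cancel₀ hs, one_smul]
        rfl
    haveI : Epi ((φmor (W := W) g).1 ≫ (ψmor (W := W) h).1) := by
      have h7 : (φmor (W := W) g).1 ≫ (ψmor (W := W) h).1 = τ.1 := rfl
      rw [h7]; infer_instance
    haveI : Epi (ψmor (W := W) h).1 := epi_of_epi (φmor g).1 (ψmor h).1
    haveI : IsIso (ψmor (W := W) h).1 := isIso_of_mono_of_epi _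
    haveI : IsIso (ψmor (W := W) h) := isIso_of_val _ inferInstance
    exact ⟨asIso (ψmor h)⟩

end PartC

theorem statement9
    (hfin : ∀ V : R, Simple V → FiniteDimensional ℝ (V ⟶ V)) :
    (∀ V : R, Simple V → (∀ f : V ⟶ V, ∃ c : ℝ, f = c • 𝟙 V) →
        Simple ((Efunctor R).obj V) ∧
        Nonempty ((Ffunctor R).obj ((Efunctor R).obj V) ≅ V ⊞ V)) ∧
    (∀ V V' : R, Simple V → Simple V' →
        Nonempty ((Efunctor R).obj V ≅ (Efunctor R).obj V') → Nonempty (V ≅ V')) ∧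
    (∀ W : CObj R, Simple W → ∀ V' : R, Simple V' →
        Nonempty ((Ffunctor R).obj W ≅ V' ⊞ V') →
        Nonempty (W ≅ (Efunctor R).obj V') ∧ (∀ f : V' ⟶ V', ∃ c : ℝ, f = c • 𝟙 V')) := by
  refine ⟨?_, ?_, ?_⟩
  · intro V hV hsc
    exact ⟨simple_E hV hsc, ⟨Iso.refl _⟩⟩
  · rintro V V' hV hV' ⟨α⟩
    exact iso_of_E_iso hV hV' α
  · rintro W hW V' hV' ⟨e⟩
    have hD := end_scalar hV' (hfin V' hV') hW e
    exact ⟨c_iso hV' hW hD e, hD⟩
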